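/- Let T be the tree metric on 5 taxa with exactly one internal edge, with cherry {1,2} on one side and leaves {3,4,5} on the other: for pendant weights e₁,…,e₅ > 0 and internal weight g > 0, set T(1,2)=e₁+e₂, T(i,j)=e_i+g+e_j for i∈{1,2} and j∈{3,4,5}, and T(i,j)=e_i+e_j for distinct i,j∈{3,4,5}. Then T is the tropical mixture of two star tree metrics on 5 taxa if and only if e₁ > g and e₂ > g. -/

import Mathlib

/-- A star tree metric on `n` taxa: a dissimilarity map of the form
`D(i,j) = e i + e j` for `i ≠ j` (and `D(i,i) = 0`) with all pendant weights positive. -/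
def IsStarTreeMetric {n : ℕ} (D : Fin n → Fin n → ℝ) : Prop :=
  ∃ e : Fin n → ℝ, (∀ i, 0 < e i) ∧ (∀ i, D i i = 0) ∧
    ∀ i j, i ≠ j → D i j = e i + e j

/-- `T` is the tropical mixture (pointwise maximum) of two star tree metrics. -/
def IsMixtureOfTwoStars {n : ℕ} (T : Fin n → Fin n → ℝ) : Prop :=
  ∃ D Dbar : Fin n → Fin n → ℝ, IsStarTreeMetric D ∧ IsStarTreeMetric Dbar ∧
    ∀ i j, T i j = max (D i j) (Dbar i j)

/-- The tree metric on 5 taxa with one internal edge of weight `g`, cherry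
`{1,2}` (indices `0,1`) on one side and leaves `{3,4,5}` (indices `2,3,4`) on
the other, with pendant weights `e`. -/
def fiveTaxaMetric (e : Fin 5 → ℝ) (g : ℝ) : Fin 5 → Fin 5 → ℝ :=
  fun i j => if i = j then 0
    else e i + e j + (if decide (i.val < 2) ≠ decide (j.val < 2) then g else 0)

/-! If `T = max (D, D̄)` for stars with weights `a`, `b`, then among the three leaves `k` across the
internal edge from a cherry leaf `i`, two, say `k` and `l`, have `T i k` and `T i l` attained by the
same star `a`. Hence `2 a i ≥ T i k + T i l - T k l = 2 (e i + g)`, and `a i + a j ≤ T i j = e i + e j`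
for the other cherry leaf `j` leaves `0 < a j ≤ e j - g`.
Conversely, moving pendant weight `g` from one cherry leaf to the other, in either direction, gives
stars with weights `e + s` and `e - s`, whose maximum is `e p + e q + |s p + s q|`, which is `T`. -/

theorem isMixtureOfTwoStars_iff {n : ℕ} {T : Fin n → Fin n → ℝ} :
    IsMixtureOfTwoStars T ↔ (∀ p, T p p = 0) ∧ ∃ a b : Fin n → ℝ, (∀ p, 0 < a p) ∧
      (∀ p, 0 < b p) ∧ ∀ p q, p ≠ q → T p q = max (a p + a q) (b p + b q) := by
  constructor
  · rintro ⟨D, Dbar, ⟨a, ha, hDdiag, hD⟩, ⟨b, hb, hDbardiag, hDbar⟩, hT⟩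
    refine ⟨fun p => by rw [hT, hDdiag, hDbardiag, max_self], a, b, ha, hb, fun p q hpq => ?_⟩
    rw [hT, hD p q hpq, hDbar p q hpq]
  · rintro ⟨hTdiag, a, b, ha, hb, hT⟩
    let star (c : Fin n → ℝ) : Fin n → Fin n → ℝ := fun p q => if p = q then 0 else c p + c q
    refine ⟨star a, star b, ⟨a, ha, fun p => if_pos rfl, fun p q h => if_neg h⟩,
      ⟨b, hb, fun p => if_pos rfl, fun p q h => if_neg h⟩, fun p q => ?_⟩
    by_cases hpq : p = q
    · subst hpq
      simp [star, hTdiag]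
    · simp [star, hpq, hT p q hpq]

theorem gromov_lt_of_star_attains {n : ℕ} {T : Fin n → Fin n → ℝ} {a : Fin n → ℝ}
    (ha : ∀ p, 0 < a p) (hle : ∀ p q, p ≠ q → a p + a q ≤ T p q) {i j k l : Fin n}
    (hij : i ≠ j) (hkl : k ≠ l) (hk : a i + a k = T i k) (hl : a i + a l = T i l) :
    T i k + T i l - T k l < 2 * T i j := by
  linarith [ha j, hle i j hij, hle k l hkl]

theorem IsMixtureOfTwoStars.lt_of_le_gromov {n : ℕ} {T : Fin n → Fin n → ℝ}
    (hT : IsMixtureOfTwoStars T) {i j : Fin n} {S : Finset (Fin n)} {c : ℝ} (hij : i ≠ j)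
    (hiS : i ∉ S) (hS : 2 < S.card) (hc : ∀ p ∈ S, ∀ q ∈ S, p ≠ q → c ≤ T i p + T i q - T p q) :
    c < 2 * T i j := by
  obtain ⟨-, a, b, ha, hb, hT⟩ := isMixtureOfTwoStars_iff.mp hT
  have hle_a : ∀ p q, p ≠ q → a p + a q ≤ T p q := fun p q hpq => (hT p q hpq).symm ▸ le_max_left _ _
  have hle_b : ∀ p q, p ≠ q → b p + b q ≤ T p q := fun p q hpq => (hT p q hpq).symm ▸ le_max_right _ _
  have hab : ∀ p ∈ S, a i + a p ≠ T i p → b i + b p = T i p := by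
    intro p hp hap
    have hTip := hT i p (ne_of_mem_of_not_mem hp hiS).symm
    rcases max_choice (a i + a p) (b i + b p) with h | h
    · exact absurd (hTip.trans h).symm hap
    · exact (hTip.trans h).symm
  -- pigeonhole: two leaves of `S` see `i` through the same star
  obtain ⟨p, hp, q, hq, hpq, hsame⟩ := Finset.exists_ne_map_eq_of_card_lt_of_maps_to
    (t := Finset.univ) (f := fun p => decide (a i + a p = T i p)) (by simpa using hS)
    (fun _ _ => Finset.mem_coe.mpr (Finset.mem_univ _))
  refine (hc p hp q hq hpq).trans_lt ?_
  by_cases hap : a i + a p = T i p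
  · have haq : a i + a q = T i q := by simpa [hap] using hsame.symm
    exact gromov_lt_of_star_attains ha hle_a hij hpq hap haq
  · have haq : a i + a q ≠ T i q := by simpa [hap] using hsame.symm
    exact gromov_lt_of_star_attains hb hle_b hij hpq (hab p hp hap) (hab q hq haq)

theorem max_add_sub_eq_add_abs (x y : ℝ) : max (x + y) (x - y) = x + |y| := by
  rw [sub_eq_add_neg, max_add_add_left, abs_eq_max_neg]

theorem isMixtureOfTwoStars_of_eq_add_abs {n : ℕ} {T : Fin n → Fin n → ℝ} {e s : Fin n → ℝ}
    (hdiag : ∀ p, T p p = 0) (hs : ∀ p, |s p| < e p)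
    (hT : ∀ p q, p ≠ q → T p q = e p + e q + |s p + s q|) : IsMixtureOfTwoStars T := by
  refine isMixtureOfTwoStars_iff.mpr ⟨hdiag, e + s, e - s,
    fun p => by simp only [Pi.add_apply]; linarith [abs_lt.mp (hs p)],
    fun p => by simp only [Pi.sub_apply]; linarith [abs_lt.mp (hs p)], fun p q hpq => ?_⟩
  have hplus : (e + s) p + (e + s) q = e p + e q + (s p + s q) := by
    simp only [Pi.add_apply]; ring
  have hminus : (e - s) p + (e - s) q = e p + e q - (s p + s q) := by
    simp only [Pi.sub_apply]; ring
  rw [hT p q hpq, hplus, hminus, max_add_sub_eq_add_abs]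

section FiveTaxa

variable (e : Fin 5 → ℝ) (g : ℝ)

theorem fiveTaxaMetric_of_lt_two_of_two_le {i j : Fin 5} (hi : i.val < 2) (hj : 2 ≤ j.val) :
    fiveTaxaMetric e g i j = e i + e j + g := by
  have hij : i ≠ j := fun h => by subst h; omega
  simp [fiveTaxaMetric, hij, hi, Nat.not_lt.mpr hj]

theorem fiveTaxaMetric_of_lt_two_iff {i j : Fin 5} (hij : i ≠ j) (h : i.val < 2 ↔ j.val < 2) :
    fiveTaxaMetric e g i j = e i + e j := by
  simp [fiveTaxaMetric, hij, h]

theorem fiveTaxaMetric_gromov {i k l : Fin 5} (hi : i.val < 2) (hk : 2 ≤ k.val) (hl : 2 ≤ l.val)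
    (hkl : k ≠ l) :
    fiveTaxaMetric e g i k + fiveTaxaMetric e g i l - fiveTaxaMetric e g k l = 2 * (e i + g) := by
  rw [fiveTaxaMetric_of_lt_two_of_two_le e g hi hk, fiveTaxaMetric_of_lt_two_of_two_le e g hi hl,
    fiveTaxaMetric_of_lt_two_iff e g hkl (by omega)]
  ring

theorem IsMixtureOfTwoStars.fiveTaxaMetric_cherry_gt (hT : IsMixtureOfTwoStars (fiveTaxaMetric e g))
    {i j : Fin 5} (hi : i.val < 2) (hj : j.val < 2) (hij : i ≠ j) : g < e j := by
  have hS : ∀ p ∈ ({2, 3, 4} : Finset (Fin 5)), 2 ≤ p.val := by decide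
  have := hT.lt_of_le_gromov hij (fun h => by have := hS i h; omega) (by decide)
    fun p hp q hq hpq => (fiveTaxaMetric_gromov e g hi (hS p hp) (hS q hq) hpq).ge
  rw [fiveTaxaMetric_of_lt_two_iff e g hij (by omega)] at this
  linarith

theorem fiveTaxaMetric_eq_add_abs (hg : 0 ≤ g) {p q : Fin 5} (hpq : p ≠ q) :
    fiveTaxaMetric e g p q = e p + e q + |![g, -g, 0, 0, 0] p + ![g, -g, 0, 0, 0] q| := by
  fin_cases p <;> fin_cases q <;> simp_all [fiveTaxaMetric, abs_of_nonneg hg]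

theorem isMixtureOfTwoStars_fiveTaxaMetric (he : ∀ i, 0 < e i) (hg : 0 ≤ g) (h0 : g < e 0)
    (h1 : g < e 1) : IsMixtureOfTwoStars (fiveTaxaMetric e g) := by
  refine isMixtureOfTwoStars_of_eq_add_abs (fun p => if_pos rfl) (s := ![g, -g, 0, 0, 0]) ?_
    fun p q => fiveTaxaMetric_eq_add_abs e g hg
  intro p
  fin_cases p <;> simp [abs_of_nonneg hg, h0, h1, he]

end FiveTaxa

/-- The 5-taxa tree metric with one internal edge of weight `g > 0`,
cherry `{1,2}` versus `{3,4,5}`, and pendant weights `e_i > 0` is a tropical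
mixture of two star tree metrics iff `e₁ > g` and `e₂ > g`. -/
theorem five_taxa_is_mixture_iff (e : Fin 5 → ℝ) (he : ∀ i, 0 < e i)
    (g : ℝ) (hg : 0 < g) :
    IsMixtureOfTwoStars (fiveTaxaMetric e g) ↔ (g < e 0 ∧ g < e 1) :=
  ⟨fun hT => ⟨hT.fiveTaxaMetric_cherry_gt e g (i := 1) (by decide) (by decide) (by decide),
      hT.fiveTaxaMetric_cherry_gt e g (i := 0) (by decide) (by decide) (by decide)⟩,
    fun ⟨h0, h1⟩ => isMixtureOfTwoStars_fiveTaxaMetric e g he hg.le h0 h1⟩
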